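/- Let 𝒜(D,k) be the augmented Maxwell operator 𝒰 = (u¹,a¹,u²,a²) ↦ (i curl u² + i∇a² − k u¹, −i div u² − k a¹, −i curl u¹ − i∇a¹ − k u², i div u¹ − k a²) on a smooth bounded domain G ⊆ ℝ³, with boundary operator ℬ𝒰 = (ν × u¹, ⟨u², ν⟩, a²) and 𝒬𝒱 = (−i v², −i b¹, i⟨v¹, ν⟩). Then the Green formula (𝒜(D,k)𝒰, 𝒱)_G + (ℬ𝒰, 𝒬𝒱)_{∂G} = (𝒰, 𝒜(D,k)𝒱)_G + (𝒬𝒰, ℬ𝒱)_{∂G} holds for all smooth 𝒰 = (u¹,a¹,u²,a²) and 𝒱 = (v¹,b¹,v²,b²). -/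

import Mathlib

open MeasureTheory

noncomputable def pd3 (i : Fin 3) (f : (Fin 3 → ℝ) → ℂ) (x : Fin 3 → ℝ) : ℂ :=
  fderiv ℝ f x (Pi.single i 1)

noncomputable def curl3 (F : (Fin 3 → ℝ) → Fin 3 → ℂ) (x : Fin 3 → ℝ) : Fin 3 → ℂ :=
  ![pd3 1 (fun y => F y 2) x - pd3 2 (fun y => F y 1) x,
    pd3 2 (fun y => F y 0) x - pd3 0 (fun y => F y 2) x,
    pd3 0 (fun y => F y 1) x - pd3 1 (fun y => F y 0) x]

noncomputable def div3 (F : (Fin 3 → ℝ) → Fin 3 → ℂ) (x : Fin 3 → ℝ) : ℂ :=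
  pd3 0 (fun y => F y 0) x + pd3 1 (fun y => F y 1) x + pd3 2 (fun y => F y 2) x

noncomputable def grad3 (f : (Fin 3 → ℝ) → ℂ) (x : Fin 3 → ℝ) : Fin 3 → ℂ :=
  ![pd3 0 f x, pd3 1 f x, pd3 2 f x]

noncomputable def ccross3 (a b : Fin 3 → ℂ) : Fin 3 → ℂ :=
  ![a 1 * b 2 - a 2 * b 1, a 2 * b 0 - a 0 * b 2, a 0 * b 1 - a 1 * b 0]

/-- The augmented Maxwell operator 𝒜(D,k). -/
noncomputable def AOp (k : ℝ)
    (u1 : (Fin 3 → ℝ) → Fin 3 → ℂ) (a1 : (Fin 3 → ℝ) → ℂ)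
    (u2 : (Fin 3 → ℝ) → Fin 3 → ℂ) (a2 : (Fin 3 → ℝ) → ℂ)
    (x : Fin 3 → ℝ) : (Fin 3 → ℂ) × ℂ × (Fin 3 → ℂ) × ℂ :=
  ((fun j => Complex.I * curl3 u2 x j + Complex.I * grad3 a2 x j - (k : ℂ) * u1 x j),
   -Complex.I * div3 u2 x - (k : ℂ) * a1 x,
   (fun j => -Complex.I * curl3 u1 x j - Complex.I * grad3 a1 x j - (k : ℂ) * u2 x j),
   Complex.I * div3 u1 x - (k : ℂ) * a2 x)

/-- The boundary operator ℬ𝒰 = (ν × u¹, ⟨u², ν⟩, a²). -/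
noncomputable def BOp (ν : (Fin 3 → ℝ) → Fin 3 → ℝ)
    (u1 u2 : (Fin 3 → ℝ) → Fin 3 → ℂ) (a2 : (Fin 3 → ℝ) → ℂ)
    (x : Fin 3 → ℝ) : (Fin 3 → ℂ) × ℂ × ℂ :=
  (ccross3 (fun i => (ν x i : ℂ)) (u1 x), ∑ j : Fin 3, u2 x j * (ν x j : ℂ), a2 x)

/-- The complementary boundary operator 𝒬𝒱 = (−i v², −i b¹, i⟨v¹, ν⟩). -/
noncomputable def QOp (ν : (Fin 3 → ℝ) → Fin 3 → ℝ)
    (v1 : (Fin 3 → ℝ) → Fin 3 → ℂ) (b1 : (Fin 3 → ℝ) → ℂ)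
    (v2 : (Fin 3 → ℝ) → Fin 3 → ℂ)
    (x : Fin 3 → ℝ) : (Fin 3 → ℂ) × ℂ × ℂ :=
  ((fun j => -Complex.I * v2 x j), -Complex.I * b1 x,
    Complex.I * ∑ j : Fin 3, v1 x j * (ν x j : ℂ))

/-- Pointwise hermitian pairing of 8-component vectors. -/
noncomputable def ip8 (P Q : (Fin 3 → ℂ) × ℂ × (Fin 3 → ℂ) × ℂ) : ℂ :=
  (∑ j : Fin 3, P.1 j * (starRingEnd ℂ) (Q.1 j)) + P.2.1 * (starRingEnd ℂ) Q.2.1 +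
    (∑ j : Fin 3, P.2.2.1 j * (starRingEnd ℂ) (Q.2.2.1 j)) +
    P.2.2.2 * (starRingEnd ℂ) Q.2.2.2

/-- Pointwise hermitian pairing of 5-component boundary vectors. -/
noncomputable def ip5 (P Q : (Fin 3 → ℂ) × ℂ × ℂ) : ℂ :=
  (∑ j : Fin 3, P.1 j * (starRingEnd ℂ) (Q.1 j)) + P.2.1 * (starRingEnd ℂ) Q.2.1 +
    P.2.2 * (starRingEnd ℂ) Q.2.2

/-!
Pointwise on `G`, `⟨𝒜𝒰, 𝒱⟩ - ⟨𝒰, 𝒜𝒱⟩` is a divergence: it equals `div W_Q - div W_B` for the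
fields `W_B = i (u¹ × v̄² + u² b̄¹ - a² v̄¹)` and `W_Q = i (u² × v̄¹ + u¹ b̄² - a¹ v̄²)`, whose
normal components are exactly the boundary pairings `⟨ℬ𝒰, 𝒬𝒱⟩` and `⟨𝒬𝒰, ℬ𝒱⟩`. The divergence theorem
turns each boundary integral into the volume integral of the matching divergence. All volume
integrands are integrable because first derivatives of a function that is `C¹` up to the boundary
of the bounded set `G` are bounded on `G`, by compactness of its closure.
-/

open Set Filter Topology

section FderivBound

variable {𝕜 : Type*} [NontriviallyNormedField 𝕜] {E F : Type*} [NormedAddCommGroup E]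
  [NormedSpace 𝕜 E] [NormedAddCommGroup F] [NormedSpace 𝕜 F] {f : E → F} {s : Set E} {x : E}

/-- Near `x`, the derivative of `f` at interior points of `s` is the first term of a Taylor
series of `f` within `s`, which is continuous on a neighbourhood of `x` in `s`. -/
theorem ContDiffWithinAt.exists_eventually_norm_fderiv_le (hf : ContDiffWithinAt 𝕜 1 f s x)
    (hx : x ∈ s) : ∃ M, ∀ᶠ y in 𝓝[s] x, y ∈ interior s → ‖fderiv 𝕜 f y‖ ≤ M := by
  obtain ⟨u, hu, p, hp⟩ := contDiffWithinAt_nat.1 hf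
  rw [insert_eq_of_mem hx] at hu
  have hp1 : ContinuousWithinAt (fun y => p y 1) u x :=
    hp.cont 1 le_rfl x (mem_of_mem_nhdsWithin hx hu)
  have hbound : ∀ᶠ y in 𝓝[s] x, ‖p y 1‖ ≤ ‖p x 1‖ + 1 :=
    nhdsWithin_le_of_mem hu (hp1.norm.eventually (ge_mem_nhds (lt_add_one _)))
  refine ⟨‖p x 1‖ + 1, ?_⟩
  filter_upwards [hbound, eventually_eventually_nhdsWithin.2 hu] with y hy huy hys
  rw [nhdsWithin_eq_nhds.2 (mem_interior_iff_mem_nhds.1 hys)] at huy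
  rw [((hp.hasFDerivWithinAt one_ne_zero (mem_of_mem_nhds huy)).hasFDerivAt huy).fderiv]
  simpa using hy

theorem IsCompact.exists_bound_norm_fderiv (hs : IsCompact s) (hf : ContDiffOn 𝕜 1 f s) :
    ∃ M, ∀ y ∈ interior s, ‖fderiv 𝕜 f y‖ ≤ M := by
  obtain ⟨M, hM⟩ : ∃ M, ∀ y ∈ s ∩ interior s, ‖fderiv 𝕜 f y‖ ≤ M := by
    refine hs.induction_on (p := fun t => ∃ M, ∀ y ∈ t ∩ interior s, ‖fderiv 𝕜 f y‖ ≤ M)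
      ⟨0, by simp⟩ ?mono ?union ?nhds
    case mono =>
      exact fun t t' htt' ⟨M, hM⟩ => ⟨M, fun y hy => hM y (inter_subset_inter_left _ htt' hy)⟩
    case union =>
      rintro t t' ⟨M, hM⟩ ⟨M', hM'⟩
      refine ⟨max M M', fun y ⟨hy, hys⟩ => hy.elim (fun h => ?_) (fun h => ?_)⟩
      exacts [(hM y ⟨h, hys⟩).trans (le_max_left _ _), (hM' y ⟨h, hys⟩).trans (le_max_right _ _)]
    case nhds =>
      intro x hx
      obtain ⟨M, hM⟩ := (hf x hx).exists_eventually_norm_fderiv_le hx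
      exact ⟨_, hM, M, fun y hy => hy.1 hy.2⟩
  exact ⟨M, fun y hy => hM y ⟨interior_subset hy, hy⟩⟩

end FderivBound

section EssentiallyBounded

attribute [fun_prop] MemLp memLp_top_const

variable {α : Type*} [MeasurableSpace α] {μ : Measure α} {f g : α → ℂ}

@[fun_prop]
theorem MemLp.fun_add_top (hf : MemLp f ⊤ μ) (hg : MemLp g ⊤ μ) :
    MemLp (fun x => f x + g x) ⊤ μ :=
  hf.add hg

@[fun_prop]
theorem MemLp.fun_sub_top (hf : MemLp f ⊤ μ) (hg : MemLp g ⊤ μ) :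
    MemLp (fun x => f x - g x) ⊤ μ :=
  hf.sub hg

@[fun_prop]
theorem MemLp.fun_mul_top (hf : MemLp f ⊤ μ) (hg : MemLp g ⊤ μ) :
    MemLp (fun x => f x * g x) ⊤ μ :=
  hg.mul' hf

@[fun_prop]
theorem MemLp.fun_conj (hf : MemLp f ⊤ μ) : MemLp (fun x => starRingEnd ℂ (f x)) ⊤ μ :=
  hf.star

theorem MemLp.integrableOn_of_measure_ne_top {s : Set α} (hs : μ s ≠ ⊤)
    (hf : MemLp f ⊤ (μ.restrict s)) : IntegrableOn f s μ :=
  have : IsFiniteMeasure (μ.restrict s) := isFiniteMeasure_restrict.2 hs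
  hf.integrable le_top

end EssentiallyBounded

section BoundedDomain

variable {G : Set (Fin 3 → ℝ)} {f : (Fin 3 → ℝ) → ℂ}

@[fun_prop]
theorem memLp_top_of_continuousOn_closure (hG : IsOpen G) (hGb : Bornology.IsBounded G)
    (hf : ContinuousOn f (closure G)) : MemLp f ⊤ (volume.restrict G) := by
  obtain ⟨C, hC⟩ := hGb.isCompact_closure.exists_bound_of_continuousOn hf
  exact memLp_top_of_bound ((hf.mono subset_closure).aestronglyMeasurable hG.measurableSet) C
    (ae_restrict_of_forall_mem hG.measurableSet fun x hx => hC x (subset_closure hx))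

@[fun_prop]
theorem memLp_top_pd3 (hG : IsOpen G) (hGb : Bornology.IsBounded G)
    (hf : ContDiffOn ℝ 1 f (closure G)) (i : Fin 3) :
    MemLp (fun x => pd3 i f x) ⊤ (volume.restrict G) := by
  obtain ⟨M, hM⟩ := hGb.isCompact_closure.exists_bound_norm_fderiv hf
  refine memLp_top_of_bound (measurable_fderiv_apply_const ℝ f _).aestronglyMeasurable
    (M * ‖(Pi.single i 1 : Fin 3 → ℝ)‖) (ae_restrict_of_forall_mem hG.measurableSet fun x hx => ?_)
  have hx' : x ∈ interior (closure G) := hG.subset_interior_iff.2 subset_closure hx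
  exact (fderiv ℝ f x).le_opNorm _ |>.trans (by gcongr; exact hM x hx')

end BoundedDomain

section PartialDerivatives

variable {f g : (Fin 3 → ℝ) → ℂ} {x : Fin 3 → ℝ}

@[fun_prop]
theorem Complex.contDiff_conj {n : WithTop ℕ∞} : ContDiff ℝ n fun z : ℂ => starRingEnd ℂ z :=
  Complex.conjCLE.contDiff

theorem pd3_conj (i : Fin 3) :
    pd3 i (fun y => starRingEnd ℂ (f y)) x = starRingEnd ℂ (pd3 i f x) := by
  change fderiv ℝ (Complex.conjCLE ∘ f) x _ = _
  rw [ContinuousLinearEquiv.comp_fderiv]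
  rfl

theorem pd3_add (i : Fin 3) (hf : DifferentiableAt ℝ f x) (hg : DifferentiableAt ℝ g x) :
    pd3 i (fun y => f y + g y) x = pd3 i f x + pd3 i g x := by
  simp [pd3, fderiv_fun_add hf hg]

theorem pd3_sub (i : Fin 3) (hf : DifferentiableAt ℝ f x) (hg : DifferentiableAt ℝ g x) :
    pd3 i (fun y => f y - g y) x = pd3 i f x - pd3 i g x := by
  simp [pd3, fderiv_fun_sub hf hg]

theorem pd3_mul (i : Fin 3) (hf : DifferentiableAt ℝ f x) (hg : DifferentiableAt ℝ g x) :
    pd3 i (fun y => f y * g y) x = pd3 i f x * g x + f x * pd3 i g x := by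
  simp only [pd3, fderiv_fun_mul hf hg]
  simp [add_comm, mul_comm]

theorem pd3_const_mul (i : Fin 3) (c : ℂ) (hf : DifferentiableAt ℝ f x) :
    pd3 i (fun y => c * f y) x = c * pd3 i f x := by
  simp [pd3, fderiv_const_mul hf c]

end PartialDerivatives

noncomputable def maxwellFlux (A B C : (Fin 3 → ℝ) → Fin 3 → ℂ) (d e : (Fin 3 → ℝ) → ℂ)
    (F : (Fin 3 → ℝ) → Fin 3 → ℂ) (y : Fin 3 → ℝ) : Fin 3 → ℂ :=
  fun j => Complex.I * (ccross3 (A y) (fun l => starRingEnd ℂ (B y l)) j +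
    C y j * starRingEnd ℂ (d y) - e y * starRingEnd ℂ (F y j))

theorem ContDiffOn.maxwellFlux {n : WithTop ℕ∞} {s : Set (Fin 3 → ℝ)}
    {A B C F : (Fin 3 → ℝ) → Fin 3 → ℂ} {d e : (Fin 3 → ℝ) → ℂ}
    (hA : ContDiffOn ℝ n A s) (hB : ContDiffOn ℝ n B s) (hC : ContDiffOn ℝ n C s)
    (hd : ContDiffOn ℝ n d s) (he : ContDiffOn ℝ n e s) (hF : ContDiffOn ℝ n F s) :
    ContDiffOn ℝ n (maxwellFlux A B C d e F) s := by
  refine contDiffOn_pi.2 fun j => ?_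
  fin_cases j <;> simp only [_root_.maxwellFlux, ccross3, Fin.reduceFinMk, Matrix.cons_val_zero,
    Matrix.cons_val_one, Matrix.cons_val_two, Matrix.head_cons, Matrix.tail_cons] <;> fun_prop

section GreenIdentities

variable (ν : (Fin 3 → ℝ) → Fin 3 → ℝ) (u1 u2 v1 v2 : (Fin 3 → ℝ) → Fin 3 → ℂ)
  (a1 a2 b1 b2 : (Fin 3 → ℝ) → ℂ) (x : Fin 3 → ℝ)

theorem ip5_BOp_QOp :
    ip5 (BOp ν u1 u2 a2 x) (QOp ν v1 b1 v2 x) =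
      ∑ j : Fin 3, maxwellFlux u1 v2 u2 b1 a2 v1 x j * (ν x j : ℂ) := by
  simp only [ip5, BOp, QOp, maxwellFlux, ccross3, Fin.sum_univ_three, Matrix.cons_val_zero,
    Matrix.cons_val_one, Matrix.cons_val_two, Matrix.head_cons, Matrix.tail_cons,
    map_add, map_mul, map_neg, Complex.conj_I, Complex.conj_ofReal]
  ring

theorem ip5_QOp_BOp :
    ip5 (QOp ν u1 a1 u2 x) (BOp ν v1 v2 b2 x) =
      ∑ j : Fin 3, maxwellFlux u2 v1 u1 b2 a1 v2 x j * (ν x j : ℂ) := by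
  simp only [ip5, BOp, QOp, maxwellFlux, ccross3, Fin.sum_univ_three, Matrix.cons_val_zero,
    Matrix.cons_val_one, Matrix.cons_val_two, Matrix.head_cons, Matrix.tail_cons,
    map_add, map_sub, map_mul, Complex.conj_ofReal]
  ring

variable {u1 u2 v1 v2 a1 a2 b1 b2 x}

theorem ip8_AOp_add_div3_maxwellFlux (k : ℝ)
    (hu1 : DifferentiableAt ℝ u1 x) (hu2 : DifferentiableAt ℝ u2 x)
    (hv1 : DifferentiableAt ℝ v1 x) (hv2 : DifferentiableAt ℝ v2 x)
    (ha1 : DifferentiableAt ℝ a1 x) (ha2 : DifferentiableAt ℝ a2 x)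
    (hb1 : DifferentiableAt ℝ b1 x) (hb2 : DifferentiableAt ℝ b2 x) :
    ip8 (AOp k u1 a1 u2 a2 x) (v1 x, b1 x, v2 x, b2 x) + div3 (maxwellFlux u1 v2 u2 b1 a2 v1) x =
      ip8 (u1 x, a1 x, u2 x, a2 x) (AOp k v1 b1 v2 b2 x) +
        div3 (maxwellFlux u2 v1 u1 b2 a1 v2) x := by
  simp only [ip8, AOp, maxwellFlux, div3, curl3, grad3, ccross3, Fin.sum_univ_three,
    Matrix.cons_val_zero, Matrix.cons_val_one, Matrix.cons_val_two, Matrix.head_cons,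
    Matrix.tail_cons]
  simp (disch := fun_prop) only [pd3_const_mul, pd3_add, pd3_sub, pd3_mul, pd3_conj]
  simp only [map_add, map_sub, map_mul, map_neg, Complex.conj_I, Complex.conj_ofReal]
  ring

end GreenIdentities

section Integrability

variable {G : Set (Fin 3 → ℝ)}

theorem integrableOn_div3 (hG : IsOpen G) (hGb : Bornology.IsBounded G)
    {W : (Fin 3 → ℝ) → Fin 3 → ℂ} (hW : ContDiffOn ℝ 1 W (closure G)) :
    IntegrableOn (div3 W) G := by
  refine MemLp.integrableOn_of_measure_ne_top hGb.measure_lt_top.ne ?_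
  unfold div3
  fun_prop (disch := assumption)

theorem integrableOn_ip8_AOp (hG : IsOpen G) (hGb : Bornology.IsBounded G) (k : ℝ)
    {u1 u2 v1 v2 : (Fin 3 → ℝ) → Fin 3 → ℂ} {a1 a2 b1 b2 : (Fin 3 → ℝ) → ℂ}
    (hu1 : ContDiffOn ℝ 1 u1 (closure G)) (hu2 : ContDiffOn ℝ 1 u2 (closure G))
    (ha1 : ContDiffOn ℝ 1 a1 (closure G)) (ha2 : ContDiffOn ℝ 1 a2 (closure G))
    (hv1 : ContinuousOn v1 (closure G)) (hv2 : ContinuousOn v2 (closure G))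
    (hb1 : ContinuousOn b1 (closure G)) (hb2 : ContinuousOn b2 (closure G)) :
    IntegrableOn (fun x => ip8 (AOp k u1 a1 u2 a2 x) (v1 x, b1 x, v2 x, b2 x)) G := by
  refine MemLp.integrableOn_of_measure_ne_top hGb.measure_lt_top.ne ?_
  simp only [ip8, AOp, curl3, grad3, div3, Fin.sum_univ_three, Matrix.cons_val_zero,
    Matrix.cons_val_one, Matrix.cons_val_two, Matrix.head_cons, Matrix.tail_cons]
  have := hu1.continuousOn; have := hu2.continuousOn
  have := ha1.continuousOn; have := ha2.continuousOn
  fun_prop (disch := assumption)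

end Integrability

theorem green_formula_augmented_maxwell
    (G : Set (Fin 3 → ℝ)) (hG : IsOpen G) (hGb : Bornology.IsBounded G)
    (ν : (Fin 3 → ℝ) → Fin 3 → ℝ)
    (σb : Measure (Fin 3 → ℝ))
    -- the divergence theorem for the domain G with outward unit normal ν and
    -- surface measure σb on ∂G:
    (hdiv : ∀ F : (Fin 3 → ℝ) → Fin 3 → ℂ, ContDiffOn ℝ (⊤ : ℕ∞) F (closure G) →
      (∫ x in G, div3 F x) = ∫ x, (∑ j : Fin 3, F x j * (ν x j : ℂ)) ∂σb)
    (k : ℝ)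
    (u1 u2 v1 v2 : (Fin 3 → ℝ) → Fin 3 → ℂ) (a1 a2 b1 b2 : (Fin 3 → ℝ) → ℂ)
    (hu1 : ContDiffOn ℝ (⊤ : ℕ∞) u1 (closure G)) (hu2 : ContDiffOn ℝ (⊤ : ℕ∞) u2 (closure G))
    (hv1 : ContDiffOn ℝ (⊤ : ℕ∞) v1 (closure G)) (hv2 : ContDiffOn ℝ (⊤ : ℕ∞) v2 (closure G))
    (ha1 : ContDiffOn ℝ (⊤ : ℕ∞) a1 (closure G)) (ha2 : ContDiffOn ℝ (⊤ : ℕ∞) a2 (closure G))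
    (hb1 : ContDiffOn ℝ (⊤ : ℕ∞) b1 (closure G)) (hb2 : ContDiffOn ℝ (⊤ : ℕ∞) b2 (closure G)) :
    (∫ x in G, ip8 (AOp k u1 a1 u2 a2 x) (v1 x, b1 x, v2 x, b2 x)) +
      (∫ x, ip5 (BOp ν u1 u2 a2 x) (QOp ν v1 b1 v2 x) ∂σb) =
    (∫ x in G, ip8 (u1 x, a1 x, u2 x, a2 x) (AOp k v1 b1 v2 b2 x)) +
      (∫ x, ip5 (QOp ν u1 a1 u2 x) (BOp ν v1 v2 b2 x) ∂σb) := by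
  have one_le : (1 : WithTop ℕ∞) ≤ (⊤ : ℕ∞) := by exact_mod_cast le_top
  have hd {F : Type} [NormedAddCommGroup F] [NormedSpace ℝ F] {f : (Fin 3 → ℝ) → F}
      (hf : ContDiffOn ℝ (⊤ : ℕ∞) f (closure G)) (x : Fin 3 → ℝ) (hx : x ∈ G) :
      DifferentiableAt ℝ f x :=
    (hf.differentiableOn (by simp)).differentiableAt
      (mem_of_superset (hG.mem_nhds hx) subset_closure)
  have hWB := ContDiffOn.maxwellFlux hu1 hv2 hu2 hb1 ha2 hv1
  have hWQ := ContDiffOn.maxwellFlux hu2 hv1 hu1 hb2 ha1 hv2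
  have hpointwise : EqOn
      (fun x => ip8 (AOp k u1 a1 u2 a2 x) (v1 x, b1 x, v2 x, b2 x) +
        div3 (maxwellFlux u1 v2 u2 b1 a2 v1) x)
      (fun x => ip8 (u1 x, a1 x, u2 x, a2 x) (AOp k v1 b1 v2 b2 x) +
        div3 (maxwellFlux u2 v1 u1 b2 a1 v2) x) G := fun x hx =>
    ip8_AOp_add_div3_maxwellFlux k (hd hu1 x hx) (hd hu2 x hx) (hd hv1 x hx) (hd hv2 x hx)
      (hd ha1 x hx) (hd ha2 x hx) (hd hb1 x hx) (hd hb2 x hx)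
  have hA := integrableOn_ip8_AOp hG hGb k (hu1.of_le one_le) (hu2.of_le one_le)
    (ha1.of_le one_le) (ha2.of_le one_le) hv1.continuousOn hv2.continuousOn hb1.continuousOn
    hb2.continuousOn
  have hdivB := integrableOn_div3 hG hGb (hWB.of_le one_le)
  have hdivQ := integrableOn_div3 hG hGb (hWQ.of_le one_le)
  have hA' : IntegrableOn (fun x => ip8 (u1 x, a1 x, u2 x, a2 x) (AOp k v1 b1 v2 b2 x)) G := by
    simpa only [Pi.sub_def, add_sub_cancel_right] using
      ((hA.add hdivB).congr_fun hpointwise hG.measurableSet).sub hdivQ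
  simp only [ip5_BOp_QOp, ip5_QOp_BOp, ← hdiv _ hWB, ← hdiv _ hWQ]
  rw [← integral_add hA hdivB, ← integral_add hA' hdivQ]
  exact setIntegral_congr_fun hG.measurableSet hpointwise
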